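/- Let p*, p₀, p₁ be strictly positive probability mass functions on a finite set X. Suppose sup_x |p*(x) − p₀(x)| ≤ ε and sup_x |log p₀(x) − log p₁(x)| ≤ M, and suppose there is a subset D ⊆ X with p₁(D) − p₀(D) = γ − δ > 0. Then D_KL(p* ‖ p₁) ≥ D_KL(p* ‖ p₀) + 2(γ − δ)² − ε·M·|X|. -/

import Mathlib

/-!
Expanding the logarithms gives the three-point identity
`D(p*‖p₁) = D(p*‖p₀) + D(p₀‖p₁) + ∑ (p* - p₀)(log p₀ - log p₁)`.
The cross term has at most `|X|` summands, each bounded by `ε M`. Since `p₀` and `p₁` have the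
same total mass, `‖p₀ - p₁‖₁ ≥ 2 |p₁(D) - p₀(D)|`, so Pinsker's inequality gives
`D(p₀‖p₁) ≥ ‖p₀ - p₁‖₁² / 2 ≥ 2 (γ - δ)²`.
Pinsker's inequality itself follows by summing the pointwise bound
`p log (p / q) ≥ p - q + 3 (p - q)² / (2 (p + 2 q))` and applying Cauchy–Schwarz with the
weights `p + 2 q`, which sum to `3`.
-/

open Real Finset InformationTheory

theorem isMinOn_of_hasDerivAt_of_sign {D : Set ℝ} (hD : Convex ℝ D) {f f' : ℝ → ℝ} {c : ℝ}
    (hc : c ∈ D) (hf : ∀ x ∈ D, HasDerivAt f (f' x) x)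
    (hleft : ∀ x ∈ D, x < c → f' x ≤ 0) (hright : ∀ x ∈ D, c < x → 0 ≤ f' x) :
    IsMinOn f D c := by
  intro t ht
  have hcont : ∀ a b, a ∈ D → b ∈ D → ContinuousOn f (Set.Icc a b) := fun a b ha hb x hx =>
    (hf x (hD.ordConnected.out ha hb hx)).continuousAt.continuousWithinAt
  have hderiv : ∀ a b, a ∈ D → b ∈ D →
      ∀ x ∈ interior (Set.Icc a b), HasDerivWithinAt f (f' x) (interior (Set.Icc a b)) x :=
    fun a b ha hb x hx =>
      (hf x (hD.ordConnected.out ha hb (interior_subset hx))).hasDerivWithinAt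
  rcases le_total c t with hct | htc
  · refine monotoneOn_of_hasDerivWithinAt_nonneg (convex_Icc c t) (hcont c t hc ht)
      (hderiv c t hc ht) (fun x hx => ?_) ⟨le_rfl, hct⟩ ⟨hct, le_rfl⟩ hct
    rw [interior_Icc] at hx
    exact hright x (hD.ordConnected.out hc ht (Set.Ioo_subset_Icc_self hx)) hx.1
  · refine antitoneOn_of_hasDerivWithinAt_nonpos (convex_Icc t c) (hcont t c ht hc)
      (hderiv t c ht hc) (fun x hx => ?_) ⟨le_rfl, htc⟩ ⟨htc, le_rfl⟩ htc
    rw [interior_Icc] at hx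
    exact hleft x (hD.ordConnected.out ht hc (Set.Ioo_subset_Icc_self hx)) hx.2

theorem monotoneOn_add_one_mul_log_sub :
    MonotoneOn (fun t => (t + 1) * log t - 2 * (t - 1)) (Set.Ioi 0) := by
  have hderiv : ∀ t ∈ Set.Ioi (0 : ℝ),
      HasDerivAt (fun t => (t + 1) * log t - 2 * (t - 1)) (log t - (1 - t⁻¹)) t := by
    intro t ht
    have ht : t ≠ 0 := ht.ne'
    refine ((((hasDerivAt_id' t).add_const 1).fun_mul (hasDerivAt_log ht)).fun_sub
      (((hasDerivAt_id' t).sub_const 1).const_mul 2)).congr_deriv ?_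
    field_simp
    ring
  refine monotoneOn_of_hasDerivWithinAt_nonneg (convex_Ioi 0)
    (fun t ht => (hderiv t ht).continuousAt.continuousWithinAt)
    (fun t ht => (hderiv t (interior_subset ht)).hasDerivWithinAt) (fun t ht => ?_)
  rw [interior_Ioi] at ht
  exact sub_nonneg.2 (one_sub_inv_le_log_of_pos ht)

-- The quadratic lower bound behind Pinsker's inequality: it is equivalent to `0 ≤ H t` for
-- `H t = 2 (t + 2) klFun t - 3 (t - 1) ^ 2`, whose derivative `4 ((t + 1) log t - 2 (t - 1))`
-- changes sign only at `t = 1`, where `H` vanishes.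
theorem three_mul_sq_div_le_klFun {t : ℝ} (ht : 0 < t) :
    3 * (t - 1) ^ 2 / (2 * (t + 2)) ≤ klFun t := by
  set G : ℝ → ℝ := fun t => (t + 1) * log t - 2 * (t - 1)
  have hG1 : G 1 = 0 := by simp [G]
  have hmin : IsMinOn (fun t => 2 * (t + 2) * klFun t - 3 * (t - 1) ^ 2) (Set.Ioi 0) 1 := by
    refine isMinOn_of_hasDerivAt_of_sign (convex_Ioi 0) (Set.mem_Ioi.2 one_pos)
      (f' := fun t => 4 * G t) (fun x hx => ?_) (fun x hx hx1 => ?_) (fun x hx hx1 => ?_)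
    · refine ((((hasDerivAt_id' x).add_const 2).const_mul 2).fun_mul
        (hasDerivAt_klFun (Set.mem_Ioi.1 hx).ne')).fun_sub
        ((((hasDerivAt_id' x).sub_const 1).fun_pow 2).const_mul 3) |>.congr_deriv ?_
      simp only [G, klFun_apply]
      ring
    · have := monotoneOn_add_one_mul_log_sub hx (Set.mem_Ioi.2 one_pos) hx1.le
      simp only [G] at hG1 this ⊢
      linarith
    · have := monotoneOn_add_one_mul_log_sub (Set.mem_Ioi.2 one_pos) hx hx1.le
      simp only [G] at hG1 this ⊢
      linarith
  have h := hmin (Set.mem_Ioi.2 ht)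
  simp only [Set.mem_ofPred_eq, klFun_one] at h
  rw [div_le_iff₀ (by positivity)]
  linarith

theorem sub_add_three_mul_sq_div_le_mul_log_div {p q : ℝ} (hp : 0 < p) (hq : 0 < q) :
    p - q + (3 / 2) * ((p - q) ^ 2 / (p + 2 * q)) ≤ p * log (p / q) := by
  have h := mul_le_mul_of_nonneg_left (three_mul_sq_div_le_klFun (div_pos hp hq)) hq.le
  have hkl : q * klFun (p / q) = p * log (p / q) + q - p := by
    rw [klFun_apply]
    field_simp
  have hquad : q * (3 * (p / q - 1) ^ 2 / (2 * (p / q + 2)))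
      = (3 / 2) * ((p - q) ^ 2 / (p + 2 * q)) := by
    field_simp
  linarith

noncomputable def discreteKL {X : Type*} [Fintype X] (p q : X → ℝ) : ℝ :=
  ∑ x, p x * log (p x / q x)

section

variable {X : Type*} [Fintype X]

theorem half_sq_sum_abs_sub_le_discreteKL {p q : X → ℝ} (hp : ∀ x, 0 < p x) (hq : ∀ x, 0 < q x)
    (hp1 : ∑ x, p x = 1) (hq1 : ∑ x, q x = 1) :
    (1 / 2) * (∑ x, |p x - q x|) ^ 2 ≤ discreteKL p q := by
  have hweight : ∑ x, (p x + 2 * q x) = 3 := by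
    rw [sum_add_distrib, ← mul_sum, hp1, hq1]
    norm_num
  calc (1 / 2) * (∑ x, |p x - q x|) ^ 2
      = (3 / 2) * ((∑ x, |p x - q x|) ^ 2 / ∑ x, (p x + 2 * q x)) := by
        rw [hweight]
        ring
    _ ≤ (3 / 2) * ∑ x, |p x - q x| ^ 2 / (p x + 2 * q x) := by
        gcongr
        exact sq_sum_div_le_sum_sq_div _ _ fun x _ => by linarith [hp x, hq x]
    _ = ∑ x, (p x - q x + (3 / 2) * ((p x - q x) ^ 2 / (p x + 2 * q x))) := by
        rw [sum_add_distrib, sum_sub_distrib, hp1, hq1, sub_self, zero_add, mul_sum]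
        simp only [sq_abs]
    _ ≤ discreteKL p q :=
        sum_le_sum fun x _ => sub_add_three_mul_sq_div_le_mul_log_div (hp x) (hq x)

theorem discreteKL_eq_add_add_sum {p q r : X → ℝ} (hq : ∀ x, q x ≠ 0) (hr : ∀ x, r x ≠ 0) :
    discreteKL p r
      = discreteKL p q + discreteKL q r + ∑ x, (p x - q x) * (log (q x) - log (r x)) := by
  simp only [discreteKL, ← sum_add_distrib]
  refine sum_congr rfl fun x _ => ?_
  rw [log_div (hq x) (hr x)]
  rcases eq_or_ne (p x) 0 with h | h
  · simp only [h]
    ring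
  · rw [log_div h (hr x), log_div h (hq x)]
    ring

theorem two_mul_abs_sum_le_sum_abs_of_sum_eq_zero {f : X → ℝ} (hf : ∑ x, f x = 0)
    (D : Finset X) :
    2 * |∑ x ∈ D, f x| ≤ ∑ x, |f x| := by
  classical
  have hcompl : ∑ x ∈ Dᶜ, f x = -∑ x ∈ D, f x := by
    linarith [sum_add_sum_compl D f]
  calc 2 * |∑ x ∈ D, f x| = |∑ x ∈ D, f x| + |∑ x ∈ Dᶜ, f x| := by
        rw [hcompl, abs_neg]
        ring
    _ ≤ ∑ x ∈ D, |f x| + ∑ x ∈ Dᶜ, |f x| :=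
        add_le_add (abs_sum_le_sum_abs _ _) (abs_sum_le_sum_abs _ _)
    _ = ∑ x, |f x| := sum_add_sum_compl D _

theorem abs_sum_mul_le_card_mul {a b : X → ℝ} {ε M : ℝ} (ha : ∀ x, |a x| ≤ ε)
    (hb : ∀ x, |b x| ≤ M) :
    |∑ x, a x * b x| ≤ ε * M * Fintype.card X := by
  calc |∑ x, a x * b x| ≤ ∑ x, |a x * b x| := abs_sum_le_sum_abs _ _
    _ ≤ ∑ _x : X, ε * M := sum_le_sum fun x _ => by
        rw [abs_mul]
        exact mul_le_mul (ha x) (hb x) (abs_nonneg _) ((abs_nonneg _).trans (ha x))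
    _ = ε * M * Fintype.card X := by
        rw [sum_const, card_univ, nsmul_eq_mul, mul_comm]

end

theorem kl_lower_bound_with_error_general {X : Type*} [Fintype X]
    (ps p0 p1 : X → ℝ) (ε M γ δ : ℝ) (D : Finset X)
    (hp0 : ∀ x, 0 < p0 x) (hp1 : ∀ x, 0 < p1 x)
    (h0sum : ∑ x, p0 x = 1) (h1sum : ∑ x, p1 x = 1)
    (hε : ∀ x, |ps x - p0 x| ≤ ε)
    (hM : ∀ x, |Real.log (p0 x) - Real.log (p1 x)| ≤ M)
    (hgap : (∑ x ∈ D, p1 x) - (∑ x ∈ D, p0 x) = γ - δ) :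
    ∑ x, ps x * Real.log (ps x / p1 x)
      ≥ (∑ x, ps x * Real.log (ps x / p0 x))
        + 2 * (γ - δ) ^ 2 - ε * M * (Fintype.card X) := by
  have hTV : 2 * |γ - δ| ≤ ∑ x, |p0 x - p1 x| := by
    have h := two_mul_abs_sum_le_sum_abs_of_sum_eq_zero (f := fun x => p0 x - p1 x)
      (by rw [sum_sub_distrib, h0sum, h1sum, sub_self]) D
    rwa [sum_sub_distrib, ← neg_sub, hgap, abs_neg] at h
  have hKL : 2 * (γ - δ) ^ 2 ≤ discreteKL p0 p1 :=
    calc 2 * (γ - δ) ^ 2 = (1 / 2) * (2 * |γ - δ|) ^ 2 := by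
          rw [mul_pow, sq_abs]
          ring
      _ ≤ (1 / 2) * (∑ x, |p0 x - p1 x|) ^ 2 := by gcongr
      _ ≤ discreteKL p0 p1 := half_sq_sum_abs_sub_le_discreteKL hp0 hp1 h0sum h1sum
  have hcross := (abs_le.1 (abs_sum_mul_le_card_mul hε hM)).1
  show discreteKL ps p0 + 2 * (γ - δ) ^ 2 - ε * M * Fintype.card X ≤ discreteKL ps p1
  rw [discreteKL_eq_add_add_sum (fun x => (hp0 x).ne') (fun x => (hp1 x).ne')]
  linarith

theorem kl_lower_bound_with_error {X : Type*} [Fintype X] [Nonempty X]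
    (ps p0 p1 : X → ℝ) (ε M γ δ : ℝ) (D : Finset X)
    (hps : ∀ x, 0 < ps x) (hp0 : ∀ x, 0 < p0 x) (hp1 : ∀ x, 0 < p1 x)
    (hpsum : ∑ x, ps x = 1) (h0sum : ∑ x, p0 x = 1) (h1sum : ∑ x, p1 x = 1)
    (hε : ∀ x, |ps x - p0 x| ≤ ε)
    (hM : ∀ x, |Real.log (p0 x) - Real.log (p1 x)| ≤ M)
    (hgap : (∑ x ∈ D, p1 x) - (∑ x ∈ D, p0 x) = γ - δ)
    (hpos : γ - δ > 0) :
    ∑ x, ps x * Real.log (ps x / p1 x)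
      ≥ (∑ x, ps x * Real.log (ps x / p0 x))
        + 2 * (γ - δ) ^ 2 - ε * M * (Fintype.card X) :=
  kl_lower_bound_with_error_general ps p0 p1 ε M γ δ D hp0 hp1 h0sum h1sum hε hM hgap
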